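/- Let ρ be a real number with 0 < ρ ≤ 1 and let w = (1/2, ρ/2) be the center of Q. Then for every point b ∈ Q one has μ({q ∈ Q : dist(q, b) < dist(q, w)}) < ρ/2. (Wilma wins the one-point game by playing the center of the rectangle.) -/

import Mathlib

open MeasureTheory Metric Set
open scoped ENNReal

/-- The point `(x, y)` in the Euclidean plane. -/
noncomputable def pt (x y : ℝ) : EuclideanSpace ℝ (Fin 2) :=
  (WithLp.equiv 2 (Fin 2 → ℝ)).symm ![x, y]

/-- The rectangular board `[0,1] × [0,ρ]`. -/
def board (ρ : ℝ) : Set (EuclideanSpace ℝ (Fin 2)) :=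
  {q | q 0 ∈ Set.Icc (0:ℝ) 1 ∧ q 1 ∈ Set.Icc (0:ℝ) ρ}

/-!
The point reflection `σ` through the center `w` preserves the board and Lebesgue measure, and
maps the region claimed by `b` onto the region claimed by `σ b`. Since `w` is the midpoint of
`b` and `σ b`, Apollonius' theorem shows that no point is strictly closer to both `b` and `σ b`
than to `w`, so the two regions are disjoint. Both also miss the ball of radius `dist b w / 2`
about `w`, which meets the board in a set of positive measure. Hence twice the measure of the
region is strictly less than the area of the board.
-/

open AffineIsometryEquiv (pointReflection pointReflection_apply dist_pointReflection_fixed)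

theorem disjoint_ball_closer {X : Type*} [PseudoMetricSpace X] (b w : X) :
    Disjoint (ball w (dist b w / 2)) {q | dist q b < dist q w} := by
  refine Set.disjoint_left.mpr fun q hqw hqb => ?_
  have := dist_triangle_left b w q
  linarith [mem_ball.mp hqw, show dist q b < dist q w from hqb]

section Affine

variable {V P : Type*} [SeminormedAddCommGroup V] [NormedSpace ℝ V] [PseudoMetricSpace P]
  [NormedAddTorsor V P]

theorem pointReflection_preimage_closer {s : Set P} {w : P}
    (hs : pointReflection ℝ w ⁻¹' s = s) (b : P) :
    pointReflection ℝ w ⁻¹' {q | q ∈ s ∧ dist q b < dist q w} =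
      {q | q ∈ s ∧ dist q (pointReflection ℝ w b) < dist q w} := by
  ext q
  have hq : pointReflection ℝ w q ∈ s ↔ q ∈ s := Set.ext_iff.mp hs q
  have hqb : dist (pointReflection ℝ w q) b = dist q (pointReflection ℝ w b) := by
    rw [← (pointReflection ℝ w).dist_map q, AffineIsometryEquiv.pointReflection_involutive]
  simp only [mem_preimage, mem_ofPred_eq, hq, hqb, dist_pointReflection_fixed]

end Affine

theorem disjoint_closer_closer_midpoint {V P : Type*} [NormedAddCommGroup V]
    [InnerProductSpace ℝ V] [MetricSpace P] [NormedAddTorsor V P] (b c : P) :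
    Disjoint {q | dist q b < dist q (midpoint ℝ b c)}
      {q | dist q c < dist q (midpoint ℝ b c)} := by
  refine Set.disjoint_left.mpr fun q hb hc => ?_
  have := EuclideanGeometry.dist_sq_add_dist_sq_eq_two_mul_dist_midpoint_sq_add_half_dist_sq q b c
  have hb2 := pow_lt_pow_left₀ hb dist_nonneg two_ne_zero
  have hc2 := pow_lt_pow_left₀ hc dist_nonneg two_ne_zero
  nlinarith [sq_nonneg (dist b c / 2)]

theorem measurePreserving_pointReflection {E : Type*} [NormedAddCommGroup E] [NormedSpace ℝ E]
    [FiniteDimensional ℝ E] [MeasurableSpace E] [BorelSpace E] (μ : Measure E)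
    [μ.IsAddHaarMeasure] (w : E) :
    MeasurePreserving (pointReflection ℝ w) μ μ := by
  have : (pointReflection ℝ w : E → E) = (· + w) ∘ (w - ·) := by
    ext q; simp [pointReflection_apply]
  rw [this]
  exact (measurePreserving_add_right μ w).comp (μ.measurePreserving_sub_left w)

theorem measure_closer_lt_half_of_pointReflection_preimage_eq {E : Type*} [NormedAddCommGroup E]
    [InnerProductSpace ℝ E] [FiniteDimensional ℝ E] [MeasurableSpace E] [BorelSpace E]
    (μ : Measure E) [μ.IsAddHaarMeasure] {s : Set E} {w : E}
    (hs : MeasurableSet s) (hsymm : pointReflection ℝ w ⁻¹' s = s) (hw : w ∈ interior s)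
    (hμs : μ s ≠ ∞) (b : E) :
    μ {q | q ∈ s ∧ dist q b < dist q w} < μ s / 2 := by
  have hs0 : μ s ≠ 0 :=
    ((isOpen_interior.measure_pos μ ⟨w, hw⟩).trans_le (measure_mono interior_subset)).ne'
  obtain rfl | hbw := eq_or_ne b w
  · simpa using ENNReal.half_pos hs0
  set T : E → Set E := fun c => {q | q ∈ s ∧ dist q c < dist q w}
  set b' := pointReflection ℝ w b
  set B := s ∩ ball w (dist b w / 2)
  have hT (c : E) : MeasurableSet (T c) :=
    hs.inter (measurableSet_lt (measurable_id.dist measurable_const)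
      (measurable_id.dist measurable_const))
  have hTb' : T b' = pointReflection ℝ w ⁻¹' T b :=
    (pointReflection_preimage_closer hsymm b).symm
  have hB : 0 < μ B :=
    calc 0 < μ (interior s ∩ ball w (dist b w / 2)) :=
          (isOpen_interior.inter isOpen_ball).measure_pos μ
            ⟨w, hw, mem_ball_self (half_pos (dist_pos.mpr hbw))⟩
      _ ≤ μ B := measure_mono (inter_subset_inter_left _ interior_subset)
  have hdisj : Disjoint (T b) (T b') := by
    have := disjoint_closer_closer_midpoint b b'
    rw [show midpoint ℝ b b' = w from midpoint_eq_iff.mpr rfl] at this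
    exact this.mono (fun _ h => h.2) (fun _ h => h.2)
  have hdisjB : Disjoint (T b ∪ T b') B := by
    have hb' := disjoint_ball_closer b' w
    rw [dist_pointReflection_fixed] at hb'
    exact Disjoint.union_left ((disjoint_ball_closer b w).symm.mono (fun _ h => h.2)
      inter_subset_right) (hb'.symm.mono (fun _ h => h.2) inter_subset_right)
  have hsum : μ (T b) + μ (T b) + μ B ≤ μ s := by
    calc μ (T b) + μ (T b) + μ B = μ (T b ∪ T b' ∪ B) := by
          rw [measure_union hdisjB (hs.inter measurableSet_ball), measure_union hdisj (hT b'), hTb',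
            (measurePreserving_pointReflection μ w).measure_preimage (hT b).nullMeasurableSet]
      _ ≤ μ s := measure_mono (union_subset (union_subset (fun _ h => h.1) (fun _ h => h.1))
          inter_subset_left)
  have hTfin : μ (T b) + μ (T b) ≠ ∞ := ne_top_of_le_ne_top hμs (le_trans le_self_add hsum)
  rw [ENNReal.lt_div_iff_mul_lt (by norm_num) (by norm_num), mul_two]
  exact (ENNReal.lt_add_right hTfin hB.ne').trans_le hsum

theorem measurableSet_board (ρ : ℝ) : MeasurableSet (board ρ) := by
  unfold board; measurability

theorem volume_board (ρ : ℝ) : volume (board ρ) = ENNReal.ofReal ρ := by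
  have h := (EuclideanSpace.volume_preserving_symm_measurableEquiv_toLp (Fin 2)).measure_preimage
    (s := Set.pi Set.univ ![Set.Icc (0:ℝ) 1, Set.Icc (0:ℝ) ρ])
    (((MeasurableSet.univ_pi (by
      intro i; fin_cases i <;> exact measurableSet_Icc))).nullMeasurableSet)
  have heq : (MeasurableEquiv.toLp 2 (Fin 2 → ℝ)).symm ⁻¹'
      (Set.pi Set.univ ![Set.Icc (0:ℝ) 1, Set.Icc (0:ℝ) ρ]) = board ρ := by
    ext q
    simp [board, Set.mem_pi, Fin.forall_fin_two]
  rw [heq] at h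
  rw [h, volume_pi_pi, Fin.prod_univ_two]
  simp [Real.volume_Icc]

theorem pointReflection_preimage_board (ρ : ℝ) :
    pointReflection ℝ (pt (1/2) (ρ/2)) ⁻¹' board ρ = board ρ := by
  ext q
  simp only [pt, board, pointReflection_apply, preimage_ofPred_eq, mem_ofPred_eq, mem_Icc,
    vsub_eq_sub, vadd_eq_add, PiLp.add_apply, PiLp.sub_apply, WithLp.equiv_symm_apply,
    Matrix.cons_val_zero, Matrix.cons_val_one, Matrix.cons_val_fin_one]
  constructor <;> rintro ⟨⟨_, _⟩, _, _⟩ <;> refine ⟨⟨?_, ?_⟩, ?_, ?_⟩ <;> linarith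

theorem center_mem_interior_board {ρ : ℝ} (hρ : 0 < ρ) :
    pt (1/2) (ρ/2) ∈ interior (board ρ) := by
  rw [mem_interior_iff_mem_nhds]
  refine Filter.inter_mem (ContinuousAt.preimage_mem_nhds (by fun_prop) (Icc_mem_nhds ?_ ?_))
    (ContinuousAt.preimage_mem_nhds (by fun_prop) (Icc_mem_nhds ?_ ?_)) <;> simp [pt] <;> linarith

theorem stmt_4 (ρ : ℝ) (hρ0 : 0 < ρ)
    (w : EuclideanSpace ℝ (Fin 2)) (hw : w = pt (1/2) (ρ/2))
    (b : EuclideanSpace ℝ (Fin 2)) :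
    volume {q | q ∈ board ρ ∧ dist q b < dist q w} < ENNReal.ofReal (ρ / 2) := by
  subst hw
  have h := measure_closer_lt_half_of_pointReflection_preimage_eq volume (measurableSet_board ρ)
    (pointReflection_preimage_board ρ) (center_mem_interior_board hρ0) (by simp [volume_board]) b
  rwa [ENNReal.ofReal_div_of_pos two_pos, ENNReal.ofReal_ofNat, ← volume_board]
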